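/- Let G be a simple graph on n vertices with maximum degree at most d, let δ > 0, and let S₁, S₂ be disjoint nonempty subsets of V with cut conductance φ_G(Sᵢ) < δ for i = 1, 2 and |S₁| + |S₂| ≤ 2n/3. Let Π be the orthogonal projection onto the span of the eigenvectors of the lazy random walk matrix M with eigenvalue greater than 1 − 4δ. Then for every α ∈ [0, 1] and every β ∈ {1 − α, −(1 − α)}, it holds that ‖αΠq_{S₁}⁰ + βΠq_{S₂}⁰‖² ≥ 1/(12(|S₁| + |S₂|)). In particular, for every ε < 1/√(12(|S₁| + |S₂|)), the vectors Πq_{S₁}⁰ and Πq_{S₂}⁰ are ε-far from collinear. -/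

import Mathlib

open scoped RealInnerProductSpace

open scoped Classical in
/-- The lazy random walk matrix of a graph `G` with degree parameter `d`. -/
noncomputable def lazyWalk {n : ℕ} (G : SimpleGraph (Fin n)) (d : ℕ) :
    Matrix (Fin n) (Fin n) ℝ :=
  Matrix.of fun u v =>
    if u = v then 1 - ((G.neighborSet u).ncard : ℝ) / (2 * d)
    else if G.Adj u v then 1 / (2 * d) else 0

/-- `G` has maximum degree at most `d`. -/
def MaxDegreeLE {n : ℕ} (G : SimpleGraph (Fin n)) (d : ℕ) : Prop :=
  ∀ v, (G.neighborSet v).ncard ≤ d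

/-- `p_u^t`: the endpoint distribution of a length-`t` lazy random walk from `u`. -/
noncomputable def pvec {n : ℕ} (G : SimpleGraph (Fin n)) (d t : ℕ) (u : Fin n) :
    EuclideanSpace ℝ (Fin n) :=
  WithLp.toLp 2 fun v => ((lazyWalk G d ^ t).mulVec fun w => if w = u then 1 else 0) v

/-- `q_u^t = p_u^t - (1/n) 𝟙`. -/
noncomputable def qvec {n : ℕ} (G : SimpleGraph (Fin n)) (d t : ℕ) (u : Fin n) :
    EuclideanSpace ℝ (Fin n) :=
  WithLp.toLp 2 fun v => pvec G d t u v - 1 / n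

/-- `q_u^0 = 1_u - (1/n) 𝟙`. -/
noncomputable def qzero {n : ℕ} (u : Fin n) : EuclideanSpace ℝ (Fin n) :=
  WithLp.toLp 2 fun v => (if v = u then 1 else 0) - 1 / n

/-- average of `q_u^0` over `u ∈ S`. -/
noncomputable def qavg {n : ℕ} (S : Finset (Fin n)) : EuclideanSpace ℝ (Fin n) :=
  (S.card : ℝ)⁻¹ • ∑ u ∈ S, qzero u

/-- `a` and `b` are `ε`-close to collinear. -/
def CloseCollinear {E : Type*} [NormedAddCommGroup E] [NormedSpace ℝ E]
    (ε : ℝ) (a b : E) : Prop :=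
  ∃ (ea eb w : E) (s s' : ℝ),
    ‖ea‖ ≤ ε ∧ ‖eb‖ ≤ ε ∧ a + ea = s • w ∧ b + eb = s' • w

/-- `a` and `b` are `ε`-close to antipodal. -/
def CloseAntipodal {E : Type*} [NormedAddCommGroup E] [NormedSpace ℝ E]
    (ε : ℝ) (a b : E) : Prop :=
  ∃ (ea eb w : E) (s s' : ℝ), 0 ≤ s ∧ 0 ≤ s' ∧
    ‖ea‖ ≤ ε ∧ ‖eb‖ ≤ ε ∧ a + ea = s • w ∧ b + eb = -(s' • w)

/-- `a` and `b` are `ε`-close to podal. -/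
def ClosePodal {E : Type*} [NormedAddCommGroup E] [NormedSpace ℝ E]
    (ε : ℝ) (a b : E) : Prop :=
  ∃ (ea eb w : E) (s s' : ℝ), 0 ≤ s ∧ 0 ≤ s' ∧
    ‖ea‖ ≤ ε ∧ ‖eb‖ ≤ ε ∧ a + ea = s • w ∧ b + eb = s' • w

/-- The Gram matrix `A_{u,v}` of two vectors. -/
noncomputable def gram2 {n : ℕ} (a b : EuclideanSpace ℝ (Fin n)) :
    Matrix (Fin 2) (Fin 2) ℝ :=
  !![‖a‖ ^ 2, ⟪a, b⟫; ⟪b, a⟫, ‖b‖ ^ 2]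

/-- Number of edges of `G` between `S` and `C \ S` (for `S ⊆ C`). -/
noncomputable def cutEdgesIn {n : ℕ} (G : SimpleGraph (Fin n)) (C S : Finset (Fin n)) : ℕ :=
  {p : Fin n × Fin n | p.1 ∈ S ∧ p.2 ∈ C ∧ p.2 ∉ S ∧ G.Adj p.1 p.2}.ncard

/-- Number of edges of `G` between `S` and its complement. -/
noncomputable def cutEdges {n : ℕ} (G : SimpleGraph (Fin n)) (S : Finset (Fin n)) : ℕ :=
  cutEdgesIn G Finset.univ S

/-- The cut conductance `φ_G(S) = e(S, V∖S) / (d|S|)`. -/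
noncomputable def cutCond {n : ℕ} (G : SimpleGraph (Fin n)) (d : ℕ) (S : Finset (Fin n)) : ℝ :=
  (cutEdges G S : ℝ) / (d * S.card)

/-- The (inner) conductance of the induced subgraph `G[C]` is at least `φ`. -/
def InnerConductanceGE {n : ℕ} (G : SimpleGraph (Fin n)) (d : ℕ) (C : Finset (Fin n))
    (φ : ℝ) : Prop :=
  ∀ S ⊆ C, S.Nonempty → 2 * S.card ≤ C.card →
    φ ≤ (cutEdgesIn G C S : ℝ) / (d * S.card)

/-- `G` is `(2, φ)`-clusterable. -/
def Clusterable2 {n : ℕ} (G : SimpleGraph (Fin n)) (d : ℕ) (φ : ℝ) : Prop :=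
  InnerConductanceGE G d Finset.univ φ ∨
  ∃ C₁ C₂ : Finset (Fin n), C₁.Nonempty ∧ C₂.Nonempty ∧ Disjoint C₁ C₂ ∧
    C₁ ∪ C₂ = Finset.univ ∧ InnerConductanceGE G d C₁ φ ∧ InnerConductanceGE G d C₂ φ

/-- `G` is `ε`-far from `(2, φ)`-clusterable. -/
def FarFromClusterable2 {n : ℕ} (G : SimpleGraph (Fin n)) (d : ℕ) (ε φ : ℝ) : Prop :=
  ∀ G' : SimpleGraph (Fin n), MaxDegreeLE G' d →
    ((symmDiff G.edgeSet G'.edgeSet).ncard : ℝ) ≤ ε * d * n →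
    ¬ Clusterable2 G' d φ

/-- The span of the eigenvectors of `M` with eigenvalue greater than `c`. -/
noncomputable def heavySpace {n : ℕ} (M : Matrix (Fin n) (Fin n) ℝ) (c : ℝ) :
    Submodule ℝ (EuclideanSpace ℝ (Fin n)) :=
  ⨆ μ : {μ : ℝ // c < μ}, Module.End.eigenspace (Matrix.toEuclideanLin M) (μ : ℝ)

/-- Orthogonal projection onto the span of the eigenvectors of `M` with eigenvalue
greater than `c`. -/
noncomputable def heavyProj {n : ℕ} (M : Matrix (Fin n) (Fin n) ℝ) (c : ℝ)
    (x : EuclideanSpace ℝ (Fin n)) : EuclideanSpace ℝ (Fin n) :=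
  (Submodule.orthogonalProjection (heavySpace M c) x : EuclideanSpace ℝ (Fin n))


/-!
`I - M` is `(2d)⁻¹` times the graph Laplacian, so its quadratic form at `q_S` equals
`φ(S) / (2|S|) < δ / (2|S|)`, whereas on the orthogonal complement of the heavy space it is at
least `4δ ‖·‖²`. Hence the heavy projection `Π` moves `q_S` by less than `1 / √(8|S|)`.
For disjoint `S₁, S₂` one computes
`‖α q_{S₁} + β q_{S₂}‖² = α²/|S₁| + β²/|S₂| - (α + β)²/n`, and removing the two residuals still
leaves at least `1 / (12(|S₁| + |S₂|))` once `|S₁| + |S₂| ≤ 2n/3`. If `Π q_{S₁}` and `Π q_{S₂}`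
were `ε`-close to a common line, the combination that cancels that line would have norm at most `ε`.
-/

theorem Submodule.norm_sq_eq_norm_starProjection_sq_add_norm_sub_sq {E : Type*}
    [NormedAddCommGroup E] [InnerProductSpace ℝ E] (K : Submodule ℝ E)
    [K.HasOrthogonalProjection] (x : E) :
    ‖x‖ ^ 2 = ‖K.starProjection x‖ ^ 2 + ‖x - K.starProjection x‖ ^ 2 := by
  rw [K.norm_sq_eq_add_norm_sq_starProjection x, K.starProjection_orthogonal']
  rfl

theorem Module.End.apply_mem_iSup_eigenspace {R M ι : Type*} [CommRing R] [AddCommGroup M]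
    [Module R M] {T : Module.End R M} {f : ι → R} {x : M}
    (hx : x ∈ ⨆ i, eigenspace T (f i)) : T x ∈ ⨆ i, eigenspace T (f i) := by
  induction hx using Submodule.iSup_induction' with
  | mem i y hy =>
    rw [mem_eigenspace_iff.mp hy]
    exact Submodule.smul_mem _ _ (Submodule.mem_iSup_of_mem i hy)
  | zero => simp
  | add y z _ _ hy hz => rw [map_add]; exact Submodule.add_mem _ hy hz

namespace LinearMap.IsSymmetric

open Module.End

variable {E : Type*} [NormedAddCommGroup E] [InnerProductSpace ℝ E] {T : E →ₗ[ℝ] E}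

theorem inner_apply_self_le_of_mem_orthogonal_iSup_eigenspace [FiniteDimensional ℝ E]
    (hT : T.IsSymmetric) {c : ℝ} {x : E}
    (hx : x ∈ (⨆ μ : {μ : ℝ // c < μ}, eigenspace T μ)ᗮ) :
    ⟪T x, x⟫ ≤ c * ‖x‖ ^ 2 := by
  have hcoeff : ∀ i, c < hT.eigenvalues rfl i → ⟪x, hT.eigenvectorBasis rfl i⟫ = 0 :=
    fun i hi => (Submodule.mem_orthogonal' _ x).mp hx _
      (Submodule.mem_iSup_of_mem ⟨_, hi⟩ (hT.hasEigenvector_eigenvectorBasis rfl i).1)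
  rw [← real_inner_self_eq_norm_sq, ← (hT.eigenvectorBasis rfl).sum_inner_mul_inner,
    ← (hT.eigenvectorBasis rfl).sum_inner_mul_inner, Finset.mul_sum]
  refine Finset.sum_le_sum fun i _ => ?_
  rw [hT, hT.apply_eigenvectorBasis, real_inner_smul_right, real_inner_comm x,
    RCLike.ofReal_real_eq_id, id_eq]
  rcases le_or_gt (hT.eigenvalues rfl i) c with hi | hi
  · nlinarith [mul_self_nonneg ⟪x, hT.eigenvectorBasis rfl i⟫]
  · simp [hcoeff i hi]

theorem inner_apply_add_self_of_mem_orthogonal (hT : T.IsSymmetric) {K : Submodule ℝ E}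
    (hK : ∀ x ∈ K, T x ∈ K) {x y : E} (hx : x ∈ K) (hy : y ∈ Kᗮ) :
    ⟪T (x + y), x + y⟫ = ⟪T x, x⟫ + ⟪T y, y⟫ := by
  have hxy : ⟪T x, y⟫ = 0 := Submodule.inner_right_of_mem_orthogonal (hK x hx) hy
  have hyx : ⟪T y, x⟫ = 0 := by rw [hT, real_inner_comm]; exact hxy
  rw [map_add, inner_add_left, inner_add_right, inner_add_right, hxy, hyx]
  ring

theorem norm_sub_starProjection_sq_le [FiniteDimensional ℝ E] (hT : T.IsSymmetric)
    (hle : ∀ x, ⟪T x, x⟫ ≤ ‖x‖ ^ 2) (c : ℝ) (x : E) :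
    (1 - c) * ‖x - (⨆ μ : {μ : ℝ // c < μ}, eigenspace T μ).starProjection x‖ ^ 2 ≤
      ‖x‖ ^ 2 - ⟪T x, x⟫ := by
  set K := ⨆ μ : {μ : ℝ // c < μ}, eigenspace T μ
  set p := K.starProjection x
  have hp : p ∈ K := K.starProjection_apply_mem x
  have hr : x - p ∈ Kᗮ := K.sub_starProjection_mem_orthogonal x
  have hsplit := hT.inner_apply_add_self_of_mem_orthogonal
    (fun _ => apply_mem_iSup_eigenspace) hp hr
  rw [add_sub_cancel] at hsplit
  have hlight := hT.inner_apply_self_le_of_mem_orthogonal_iSup_eigenspace hr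
  linarith [hle p, K.norm_sq_eq_norm_starProjection_sq_add_norm_sub_sq x]

end LinearMap.IsSymmetric

theorem CloseCollinear.exists_norm_smul_add_smul_le {E : Type*} [NormedAddCommGroup E]
    [NormedSpace ℝ E] {ε : ℝ} {a b : E} (h : CloseCollinear ε a b) :
    ∃ α β : ℝ, 0 ≤ α ∧ α ≤ 1 ∧ (β = 1 - α ∨ β = -(1 - α)) ∧ ‖α • a + β • b‖ ≤ ε := by
  obtain ⟨ea, eb, w, s, s', hea, heb, ha, hb⟩ := h
  have hcross : s' • a - s • b = s • eb - s' • ea := by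
    have : s' • (a + ea) = s • (b + eb) := by rw [ha, hb, smul_smul, smul_smul, mul_comm]
    rw [smul_add, smul_add] at this
    rw [sub_eq_sub_iff_add_eq_add, this, add_comm]
  have hnorm : ‖s' • a - s • b‖ ≤ (|s| + |s'|) * ε := by
    rw [hcross]
    calc ‖s • eb - s' • ea‖ ≤ |s| * ‖eb‖ + |s'| * ‖ea‖ := by
          simpa only [norm_smul, Real.norm_eq_abs] using norm_sub_le (s • eb) (s' • ea)
      _ ≤ (|s| + |s'|) * ε := by
          nlinarith [abs_nonneg s, abs_nonneg s', mul_le_mul_of_nonneg_left heb (abs_nonneg s),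
            mul_le_mul_of_nonneg_left hea (abs_nonneg s')]
  rcases (add_nonneg (abs_nonneg s) (abs_nonneg s')).eq_or_lt with ht | ht
  · have hs : s = 0 := abs_eq_zero.mp (by linarith [abs_nonneg s, abs_nonneg s'])
    refine ⟨1, 0, zero_le_one, le_rfl, Or.inl (by ring), ?_⟩
    rw [hs, zero_smul, add_eq_zero_iff_eq_neg] at ha
    simpa [ha] using hea
  obtain ⟨σ, hσ, hσs'⟩ : ∃ σ : ℝ, |σ| = 1 ∧ σ * s' = |s'| := by
    rcases le_total 0 s' with h | h
    exacts [⟨1, by simp, by simp [abs_of_nonneg h]⟩, ⟨-1, by simp, by simp [abs_of_nonpos h]⟩]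
  set t := |s| + |s'|
  have hαle : |s'| / t ≤ 1 := div_le_one_of_le₀ (by linarith [abs_nonneg s]) ht.le
  refine ⟨|s'| / t, -(σ * s) / t, by positivity, hαle, ?_, ?_⟩
  · refine (abs_eq (sub_nonneg.mpr hαle)).mp ?_
    rw [abs_div, abs_neg, abs_mul, hσ, one_mul, abs_of_pos ht]
    field_simp
    ring
  · have hcomb : (|s'| / t) • a + (-(σ * s) / t) • b = (σ / t) • (s' • a - s • b) := by
      rw [← hσs']
      module
    rw [hcomb, norm_smul, Real.norm_eq_abs, abs_div, hσ, abs_of_pos ht, one_div_mul_eq_div,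
      div_le_iff₀ ht, mul_comm ε]
    exact hnorm

theorem norm_smul_add_smul_sq_le {E : Type*} [SeminormedAddCommGroup E] [NormedSpace ℝ E]
    (α β : ℝ) (x y : E) : ‖α • x + β • y‖ ^ 2 ≤ 2 * (α ^ 2 * ‖x‖ ^ 2 + β ^ 2 * ‖y‖ ^ 2) := by
  calc ‖α • x + β • y‖ ^ 2 ≤ (‖α • x‖ + ‖β • y‖) ^ 2 := by gcongr; exact norm_add_le _ _
    _ ≤ 2 * (‖α • x‖ ^ 2 + ‖β • y‖ ^ 2) := add_sq_le
    _ = 2 * (α ^ 2 * ‖x‖ ^ 2 + β ^ 2 * ‖y‖ ^ 2) := by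
      rw [norm_smul, norm_smul, mul_pow, mul_pow, Real.norm_eq_abs, Real.norm_eq_abs, sq_abs,
        sq_abs]

theorem one_div_twelve_mul_add_le {s₁ s₂ m α β : ℝ} (hs₁ : 0 < s₁) (hs₂ : 0 < s₂)
    (hm : s₁ + s₂ ≤ 2 * m / 3) (hα₀ : 0 ≤ α) (hα₁ : α ≤ 1) (hβ : β = 1 - α ∨ β = -(1 - α)) :
    1 / (12 * (s₁ + s₂)) ≤ 3 / 4 * (α ^ 2 / s₁ + β ^ 2 / s₂) - (α + β) ^ 2 / m := by
  have hβsq : β ^ 2 = (1 - α) ^ 2 := by rcases hβ with rfl | rfl <;> ring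
  have hsum : (α + β) ^ 2 ≤ 1 := by rcases hβ with rfl | rfl <;> nlinarith
  have htitu : 1 / (s₁ + s₂) ≤ α ^ 2 / s₁ + β ^ 2 / s₂ := by
    rw [hβsq, div_add_div _ _ hs₁.ne' hs₂.ne', div_le_div_iff₀ (by positivity) (by positivity)]
    nlinarith [sq_nonneg (α * s₂ - (1 - α) * s₁)]
  have hm' : (α + β) ^ 2 / m ≤ 2 / (3 * (s₁ + s₂)) := by
    rw [div_le_div_iff₀ (by linarith) (by positivity)]
    nlinarith
  calc 1 / (12 * (s₁ + s₂)) = 3 / 4 * (1 / (s₁ + s₂)) - 2 / (3 * (s₁ + s₂)) := by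
        field_simp; ring
    _ ≤ _ := by linarith

open Matrix in
theorem Matrix.inner_toEuclideanLin_self {ι : Type*} [Fintype ι] [DecidableEq ι]
    (A : Matrix ι ι ℝ) (x : EuclideanSpace ℝ ι) : ⟪toEuclideanLin A x, x⟫ = x ⬝ᵥ A *ᵥ x := by
  simp [EuclideanSpace.inner_eq_star_dotProduct, toLpLin_apply]

theorem SimpleGraph.ncard_neighborSet_eq_degree {V : Type*} (G : SimpleGraph V) (v : V)
    [Fintype (G.neighborSet v)] : (G.neighborSet v).ncard = G.degree v := by
  rw [Set.ncard_eq_toFinset_card', ← card_neighborSet_eq_degree, Set.toFinset_card]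

section LazyWalk

open Matrix Finset

variable {n d : ℕ} (G : SimpleGraph (Fin n))

theorem lazyWalk_eq_one_sub_smul_lapMatrix [DecidableRel G.Adj] :
    lazyWalk G d = 1 - (2 * d : ℝ)⁻¹ • G.lapMatrix ℝ := by
  ext u v
  by_cases huv : u = v
  · subst huv
    simp [lazyWalk, SimpleGraph.lapMatrix, SimpleGraph.degMatrix,
      G.ncard_neighborSet_eq_degree, div_eq_inv_mul]
  · by_cases hadj : G.Adj u v <;>
      simp [lazyWalk, SimpleGraph.lapMatrix, SimpleGraph.degMatrix, huv, hadj]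

theorem norm_sq_sub_inner_lazyWalk [DecidableRel G.Adj] (x : EuclideanSpace ℝ (Fin n)) :
    ‖x‖ ^ 2 - ⟪toEuclideanLin (lazyWalk G d) x, x⟫ =
      (∑ u, ∑ v, if G.Adj u v then (x u - x v) ^ 2 else 0) / (4 * d) := by
  have hL := G.lapMatrix_toLinearMap₂' ℝ x
  rw [toLinearMap₂'_apply'] at hL
  rw [← real_inner_self_eq_norm_sq, inner_toEuclideanLin_self,
    lazyWalk_eq_one_sub_smul_lapMatrix, sub_mulVec, one_mulVec, smul_mulVec, dotProduct_sub,
    dotProduct_smul, hL, EuclideanSpace.inner_eq_star_dotProduct, star_trivial, dotProduct_comm,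
    smul_eq_mul]
  ring

theorem isSymmetric_toEuclideanLin_lazyWalk : (toEuclideanLin (lazyWalk G d)).IsSymmetric := by
  classical
  rw [isSymmetric_toEuclideanLin_iff, lazyWalk_eq_one_sub_smul_lapMatrix]
  exact isHermitian_one.sub ((G.isHermitian_lapMatrix ℝ).smul (IsSelfAdjoint.all _))

theorem inner_toEuclideanLin_lazyWalk_le (x : EuclideanSpace ℝ (Fin n)) :
    ⟪toEuclideanLin (lazyWalk G d) x, x⟫ ≤ ‖x‖ ^ 2 := by
  classical
  rw [← sub_nonneg, norm_sq_sub_inner_lazyWalk]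
  refine div_nonneg (sum_nonneg fun u _ => sum_nonneg fun v _ => ?_) (by positivity)
  split_ifs <;> positivity

end LazyWalk

section Qavg

open Finset

variable {n d : ℕ}

theorem qavg_apply {S : Finset (Fin n)} (hS : S.Nonempty) (v : Fin n) :
    qavg S v = (if v ∈ S then (#S : ℝ)⁻¹ else 0) - 1 / n := by
  have hs : (#S : ℝ) ≠ 0 := by exact_mod_cast hS.card_ne_zero
  simp only [qavg, qzero, PiLp.smul_apply, WithLp.ofLp_sum, Finset.sum_apply, sum_sub_distrib,
    sum_ite_eq, sum_const, smul_eq_mul, nsmul_eq_mul]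
  split_ifs
  · field_simp
  · field_simp; ring

theorem inner_qavg {S T : Finset (Fin n)} (hS : S.Nonempty) (hT : T.Nonempty) :
    ⟪qavg S, qavg T⟫ = #(S ∩ T) / (#S * #T) - 1 / n := by
  have hs : (#S : ℝ) ≠ 0 := by exact_mod_cast hS.card_ne_zero
  have ht : (#T : ℝ) ≠ 0 := by exact_mod_cast hT.card_ne_zero
  have hn : (n : ℝ) ≠ 0 := by obtain ⟨v, _⟩ := hS; exact_mod_cast v.pos.ne'
  simp only [PiLp.inner_apply, RCLike.inner_apply, conj_trivial, qavg_apply hS, qavg_apply hT,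
    sub_mul, mul_sub, sum_sub_distrib, ite_mul, mul_ite, zero_mul, mul_zero, sum_ite_mem,
    univ_inter, sum_const, card_univ, Fintype.card_fin, nsmul_eq_mul]
  field_simp
  ring

theorem norm_sq_smul_qavg_add_smul_qavg {S₁ S₂ : Finset (Fin n)} (h₁ : S₁.Nonempty)
    (h₂ : S₂.Nonempty) (hdisj : Disjoint S₁ S₂) (α β : ℝ) :
    ‖α • qavg S₁ + β • qavg S₂‖ ^ 2 = α ^ 2 / #S₁ + β ^ 2 / #S₂ - (α + β) ^ 2 / n := by
  have hs₁ : (#S₁ : ℝ) ≠ 0 := by exact_mod_cast h₁.card_ne_zero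
  have hs₂ : (#S₂ : ℝ) ≠ 0 := by exact_mod_cast h₂.card_ne_zero
  rw [norm_add_sq_real, norm_smul, norm_smul, mul_pow, mul_pow, real_inner_smul_left,
    real_inner_smul_right, ← real_inner_self_eq_norm_sq (qavg S₁),
    ← real_inner_self_eq_norm_sq (qavg S₂), inner_qavg h₁ h₁, inner_qavg h₂ h₂,
    inner_qavg h₁ h₂, inter_self, inter_self, disjoint_iff_inter_eq_empty.mp hdisj,
    Real.norm_eq_abs, Real.norm_eq_abs, sq_abs, sq_abs, card_empty, Nat.cast_zero]
  field_simp
  ring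

variable (G : SimpleGraph (Fin n))

theorem cutEdges_eq_sum [DecidableRel G.Adj] (S : Finset (Fin n)) :
    (cutEdges G S : ℝ) = ∑ u, ∑ v, if u ∈ S ∧ v ∉ S ∧ G.Adj u v then 1 else 0 := by
  have hset : {p : Fin n × Fin n | p.1 ∈ S ∧ p.2 ∈ univ ∧ p.2 ∉ S ∧ G.Adj p.1 p.2} =
      ↑(univ.filter fun p : Fin n × Fin n => p.1 ∈ S ∧ p.2 ∉ S ∧ G.Adj p.1 p.2) := by
    ext; simp
  rw [cutEdges, cutEdgesIn, hset, Set.ncard_coe_finset, card_filter, Nat.cast_sum,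
    ← Fintype.sum_prod_type']
  simp

theorem sum_adj_sq_sub_indicator [DecidableRel G.Adj] (S : Finset (Fin n)) (a : ℝ) :
    (∑ u, ∑ v, if G.Adj u v then
      ((if u ∈ S then a else 0) - (if v ∈ S then a else 0)) ^ 2 else 0) =
      2 * a ^ 2 * cutEdges G S := by
  have hterm : ∀ u v, (if G.Adj u v then
      ((if u ∈ S then a else 0) - (if v ∈ S then a else 0)) ^ 2 else 0) =
      a ^ 2 * ((if u ∈ S ∧ v ∉ S ∧ G.Adj u v then 1 else 0) +
        (if v ∈ S ∧ u ∉ S ∧ G.Adj v u then 1 else 0)) := by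
    intro u v
    by_cases hadj : G.Adj u v <;> by_cases hu : u ∈ S <;> by_cases hv : v ∈ S <;>
      simp [hadj, hu, hv, G.adj_comm v u]
  simp only [hterm, ← mul_sum, sum_add_distrib]
  rw [sum_comm (f := fun u v => if v ∈ S ∧ u ∉ S ∧ G.Adj v u then (1 : ℝ) else 0),
    ← cutEdges_eq_sum]
  ring

theorem norm_sq_sub_inner_lazyWalk_qavg {S : Finset (Fin n)} (hS : S.Nonempty) :
    ‖qavg S‖ ^ 2 - ⟪Matrix.toEuclideanLin (lazyWalk G d) (qavg S), qavg S⟫ =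
      cutCond G d S / (2 * #S) := by
  classical
  have hs : (#S : ℝ) ≠ 0 := by exact_mod_cast hS.card_ne_zero
  simp only [norm_sq_sub_inner_lazyWalk, qavg_apply hS, sub_sub_sub_cancel_right,
    sum_adj_sq_sub_indicator, cutCond]
  field_simp
  ring

end Qavg

theorem heavyProj_eq_starProjection {n : ℕ} (M : Matrix (Fin n) (Fin n) ℝ) (c : ℝ) :
    heavyProj M c = (heavySpace M c).starProjection :=
  rfl

section HeavyProj

open Finset

variable {n d : ℕ} (G : SimpleGraph (Fin n))

theorem norm_qavg_sub_heavyProj_sq_lt {δ : ℝ} (hδ : 0 < δ) {S : Finset (Fin n)}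
    (hS : S.Nonempty) (hcut : cutCond G d S < δ) :
    ‖qavg S - heavyProj (lazyWalk G d) (1 - 4 * δ) (qavg S)‖ ^ 2 < 1 / (8 * #S) := by
  have hs : (0 : ℝ) < #S := by exact_mod_cast hS.card_pos
  have hspec := (isSymmetric_toEuclideanLin_lazyWalk G (d := d)).norm_sub_starProjection_sq_le
    (inner_toEuclideanLin_lazyWalk_le G) (1 - 4 * δ) (qavg S)
  rw [norm_sq_sub_inner_lazyWalk_qavg G hS, sub_sub_cancel] at hspec
  change 4 * δ * ‖qavg S - heavyProj (lazyWalk G d) (1 - 4 * δ) (qavg S)‖ ^ 2 ≤ _ at hspec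
  have h := hspec.trans_lt (div_lt_div_of_pos_right hcut (by positivity))
  rw [lt_div_iff₀ (by positivity)] at h ⊢
  nlinarith

theorem le_norm_sq_smul_heavyProj_add_smul_heavyProj {δ : ℝ} (hδ : 0 < δ)
    {S₁ S₂ : Finset (Fin n)} (h₁ : S₁.Nonempty) (h₂ : S₂.Nonempty) (hdisj : Disjoint S₁ S₂)
    (hc₁ : cutCond G d S₁ < δ) (hc₂ : cutCond G d S₂ < δ) (hsize : (#S₁ + #S₂ : ℝ) ≤ 2 * n / 3)
    {α β : ℝ} (hα₀ : 0 ≤ α) (hα₁ : α ≤ 1) (hβ : β = 1 - α ∨ β = -(1 - α)) :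
    1 / (12 * (#S₁ + #S₂)) ≤
      ‖α • heavyProj (lazyWalk G d) (1 - 4 * δ) (qavg S₁) +
        β • heavyProj (lazyWalk G d) (1 - 4 * δ) (qavg S₂)‖ ^ 2 := by
  set P := heavyProj (lazyWalk G d) (1 - 4 * δ) with hP
  set w := α • qavg S₁ + β • qavg S₂
  have hlin : α • P (qavg S₁) + β • P (qavg S₂) = P w := by
    simp only [hP, heavyProj_eq_starProjection, w, map_add, map_smul]
  have hres : w - P w = α • (qavg S₁ - P (qavg S₁)) + β • (qavg S₂ - P (qavg S₂)) := by
    rw [← hlin]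
    module
  have hr₁ := norm_qavg_sub_heavyProj_sq_lt G hδ h₁ hc₁
  have hr₂ := norm_qavg_sub_heavyProj_sq_lt G hδ h₂ hc₂
  have hresbound : ‖w - P w‖ ^ 2 ≤ (α ^ 2 / #S₁ + β ^ 2 / #S₂) / 4 := by
    have e₁ := mul_le_mul_of_nonneg_left hr₁.le (sq_nonneg α)
    have e₂ := mul_le_mul_of_nonneg_left hr₂.le (sq_nonneg β)
    have : (α ^ 2 / #S₁ + β ^ 2 / #S₂) / 4 =
        2 * (α ^ 2 * (1 / (8 * #S₁)) + β ^ 2 * (1 / (8 * #S₂))) := by ring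
    linarith [hres ▸ norm_smul_add_smul_sq_le α β (qavg S₁ - P (qavg S₁)) (qavg S₂ - P (qavg S₂))]
  have hpyth :=
    (heavySpace (lazyWalk G d) (1 - 4 * δ)).norm_sq_eq_norm_starProjection_sq_add_norm_sub_sq w
  rw [← heavyProj_eq_starProjection, norm_sq_smul_qavg_add_smul_qavg h₁ h₂ hdisj] at hpyth
  have harith := one_div_twelve_mul_add_le (Nat.cast_pos.mpr h₁.card_pos)
    (Nat.cast_pos.mpr h₂.card_pos) hsize hα₀ hα₁ hβ
  rw [hlin]
  linarith

end HeavyProj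

theorem stmt12_general {n d : ℕ} (G : SimpleGraph (Fin n))
    (δ : ℝ) (hδ : 0 < δ) (S₁ S₂ : Finset (Fin n)) (h1 : S₁.Nonempty) (h2 : S₂.Nonempty)
    (hdisj : Disjoint S₁ S₂)
    (hc1 : cutCond G d S₁ < δ) (hc2 : cutCond G d S₂ < δ)
    (hsize : (S₁.card + S₂.card : ℝ) ≤ 2 * n / 3) :
    (∀ α β : ℝ, 0 ≤ α → α ≤ 1 → (β = 1 - α ∨ β = -(1 - α)) →
      1 / (12 * (S₁.card + S₂.card)) ≤
        ‖α • heavyProj (lazyWalk G d) (1 - 4 * δ) (qavg S₁) +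
          β • heavyProj (lazyWalk G d) (1 - 4 * δ) (qavg S₂)‖ ^ 2) ∧
    (∀ ε : ℝ, ε < 1 / Real.sqrt (12 * (S₁.card + S₂.card)) →
      ¬ CloseCollinear ε (heavyProj (lazyWalk G d) (1 - 4 * δ) (qavg S₁))
        (heavyProj (lazyWalk G d) (1 - 4 * δ) (qavg S₂))) := by
  have hbound : ∀ α β : ℝ, 0 ≤ α → α ≤ 1 → (β = 1 - α ∨ β = -(1 - α)) → _ :=
    fun α β hα₀ hα₁ hβ =>
      le_norm_sq_smul_heavyProj_add_smul_heavyProj G hδ h1 h2 hdisj hc1 hc2 hsize hα₀ hα₁ hβ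
  refine ⟨hbound, fun ε hε hclose => ?_⟩
  obtain ⟨α, β, hα₀, hα₁, hβ, hle⟩ := hclose.exists_norm_smul_add_smul_le
  have hε₀ : 0 ≤ ε := (norm_nonneg _).trans hle
  have hT : (0 : ℝ) < 12 * (S₁.card + S₂.card) := by
    have := h1.card_pos
    positivity
  have hεsq : ε ^ 2 < 1 / (12 * (S₁.card + S₂.card : ℝ)) := by
    calc ε ^ 2 < (1 / Real.sqrt (12 * (S₁.card + S₂.card))) ^ 2 := by gcongr
      _ = 1 / (12 * (S₁.card + S₂.card : ℝ)) := by rw [div_pow, one_pow, Real.sq_sqrt hT.le]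
  have := (hbound α β hα₀ hα₁ hβ).trans (pow_le_pow_left₀ (norm_nonneg _) hle 2)
  linarith

theorem stmt12 {n d : ℕ} (hd : 1 ≤ d) (G : SimpleGraph (Fin n)) (hdeg : MaxDegreeLE G d)
    (δ : ℝ) (hδ : 0 < δ) (S₁ S₂ : Finset (Fin n)) (h1 : S₁.Nonempty) (h2 : S₂.Nonempty)
    (hdisj : Disjoint S₁ S₂)
    (hc1 : cutCond G d S₁ < δ) (hc2 : cutCond G d S₂ < δ)
    (hsize : (S₁.card + S₂.card : ℝ) ≤ 2 * n / 3) :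
    (∀ α β : ℝ, 0 ≤ α → α ≤ 1 → (β = 1 - α ∨ β = -(1 - α)) →
      1 / (12 * (S₁.card + S₂.card)) ≤
        ‖α • heavyProj (lazyWalk G d) (1 - 4 * δ) (qavg S₁) +
          β • heavyProj (lazyWalk G d) (1 - 4 * δ) (qavg S₂)‖ ^ 2) ∧
    (∀ ε : ℝ, ε < 1 / Real.sqrt (12 * (S₁.card + S₂.card)) →
      ¬ CloseCollinear ε (heavyProj (lazyWalk G d) (1 - 4 * δ) (qavg S₁))
        (heavyProj (lazyWalk G d) (1 - 4 * δ) (qavg S₂))) :=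
  stmt12_general G δ hδ S₁ S₂ h1 h2 hdisj hc1 hc2 hsize
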